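/- Let n ≥ 3 and 2 ≤ p < n. Then there exists C > 0 such that for all smooth compactly supported radial functions u on ℝⁿ (written u(x) = u(|x|)), ∫_{ℝⁿ} |∂_r u|^p dx − ((n−p)/p)^p ∫_{ℝⁿ} |u|^p/|x|^p dx ≥ C ∫_{ℝⁿ} |x|^{p−n} |∂_r v|^p dx, where v(x) = |x|^{(n−p)/p} u(x) and ∂_r denotes the radial derivative d/d|x|. -/

import Mathlib

set_option maxHeartbeats 1000000

open MeasureTheory Set Real Filter Topology

section RadialHardyAux


lemma sq_rpow_half {p : ℝ} (s : ℝ) : (s ^ 2 : ℝ) ^ (p / 2) = |s| ^ p := by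
  rw [← sq_abs, ← Real.rpow_natCast |s| 2, ← Real.rpow_mul (abs_nonneg s)]
  congr 1; ring

lemma abs_rpow_mul_abs {p : ℝ} (hp : 2 ≤ p) (s : ℝ) :
    |s| ^ (p - 2) * |s| = |s| ^ (p - 1) := by
  rcases eq_or_ne s 0 with rfl | h
  · simp [Real.zero_rpow (by linarith : p - 1 ≠ 0)]
  · rw [show p - 1 = (p - 2) + 1 by ring, Real.rpow_add_one (abs_ne_zero.2 h)]

lemma rpow_signed_eq_of_nonneg {p : ℝ} (hp : 2 ≤ p) {t : ℝ} (ht : 0 ≤ t) :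
    |t| ^ (p - 2) * t = t ^ (p - 1) := by
  rcases eq_or_ne t 0 with rfl | h
  · simp [Real.zero_rpow (by linarith : p - 1 ≠ 0)]
  · rw [abs_of_nonneg ht, show p - 1 = (p - 2) + 1 by ring, Real.rpow_add_one h]

lemma rpow_signed_eq_of_nonpos {p : ℝ} (hp : 2 ≤ p) {t : ℝ} (ht : t ≤ 0) :
    |t| ^ (p - 2) * t = -(|t| ^ (p - 1)) := by
  have h1 : |t| ^ (p - 2) * t = -(|t| ^ (p - 2) * |t|) := by
    rw [abs_of_nonpos ht]; ring
  rw [h1, abs_rpow_mul_abs hp]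

lemma monotone_signed_rpow {p : ℝ} (hp : 2 ≤ p) :
    Monotone (fun t : ℝ => |t| ^ (p - 2) * t) := by
  intro x y hxy
  have hp1 : (0 : ℝ) ≤ p - 1 := by linarith
  show |x| ^ (p - 2) * x ≤ |y| ^ (p - 2) * y
  rcases le_total 0 x with hx | hx
  · rw [rpow_signed_eq_of_nonneg hp hx, rpow_signed_eq_of_nonneg hp (hx.trans hxy)]
    exact Real.rpow_le_rpow hx hxy hp1
  · rcases le_total 0 y with hy | hy
    · rw [rpow_signed_eq_of_nonneg hp hy]
      calc |x| ^ (p - 2) * x ≤ 0 :=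
            mul_nonpos_of_nonneg_of_nonpos (Real.rpow_nonneg (abs_nonneg x) _) hx
      _ ≤ y ^ (p - 1) := Real.rpow_nonneg hy _
    · rw [rpow_signed_eq_of_nonpos hp hx, rpow_signed_eq_of_nonpos hp hy, neg_le_neg_iff]
      exact Real.rpow_le_rpow (abs_nonneg y)
        (by rw [abs_of_nonpos hx, abs_of_nonpos hy]; linarith) hp1

lemma tangent_ineq {p : ℝ} (hp : 2 ≤ p) (x y : ℝ) :
    |y| ^ p + p * |y| ^ (p - 2) * y * (x - y) ≤ |x| ^ p := by
  have hp0 : (0 : ℝ) < p := by linarith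
  have hp1 : (1 : ℝ) < p := by linarith
  set c : ℝ := p * (|y| ^ (p - 2) * y) with hc
  have hg : ∀ t : ℝ, HasDerivAt (fun s : ℝ => |s| ^ p - c * s)
      (p * |t| ^ (p - 2) * t - c) t := fun t =>
    (hasDerivAt_abs_rpow t hp1).sub (by simpa using (hasDerivAt_id t).const_mul c)
  have hderiv : ∀ t : ℝ, deriv (fun s : ℝ => |s| ^ p - c * s) t = p * |t| ^ (p - 2) * t - c :=
    fun t => (hg t).deriv
  have hcont : Continuous (fun s : ℝ => |s| ^ p - c * s) := by
    have : Differentiable ℝ (fun s : ℝ => |s| ^ p - c * s) := fun t => (hg t).differentiableAt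
    exact this.continuous
  have key : (fun s : ℝ => |s| ^ p - c * s) y ≤ (fun s : ℝ => |s| ^ p - c * s) x := by
    rcases le_total y x with h | h
    · have hmono : MonotoneOn (fun s : ℝ => |s| ^ p - c * s) (Icc y x) := by
        apply monotoneOn_of_deriv_nonneg (convex_Icc y x) hcont.continuousOn
        · intro t ht
          exact ((hg t).differentiableAt).differentiableWithinAt
        · intro t ht
          rw [interior_Icc] at ht
          rw [hderiv t, hc]
          have := monotone_signed_rpow hp (le_of_lt ht.1)
          simp only at this
          nlinarith [this]
      exact hmono (left_mem_Icc.2 h) (right_mem_Icc.2 h) h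
    · have hmono : AntitoneOn (fun s : ℝ => |s| ^ p - c * s) (Icc x y) := by
        apply antitoneOn_of_deriv_nonpos (convex_Icc x y) hcont.continuousOn
        · intro t ht
          exact ((hg t).differentiableAt).differentiableWithinAt
        · intro t ht
          rw [interior_Icc] at ht
          rw [hderiv t, hc]
          have := monotone_signed_rpow hp (le_of_lt ht.2)
          simp only at this
          nlinarith [this]
      exact hmono (left_mem_Icc.2 h) (right_mem_Icc.2 h) h
  simp only at key
  have hce : p * |y| ^ (p - 2) * y * (x - y) = c * x - c * y := by rw [hc]; ring
  linarith [key]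

lemma two_convex_rpow {q : ℝ} (hq : 1 ≤ q) {A B : ℝ} (hA : 0 ≤ A) (hB : 0 ≤ B) :
    ((A + B) / 2) ^ q ≤ (A ^ q + B ^ q) / 2 := by
  have h := (convexOn_rpow hq).2 (mem_Ici.2 hA) (mem_Ici.2 hB)
      (by norm_num : (0:ℝ) ≤ 1/2) (by norm_num : (0:ℝ) ≤ 1/2) (by norm_num)
  simp only [smul_eq_mul] at h
  calc ((A + B) / 2) ^ q = (1/2 * A + 1/2 * B) ^ q := by ring_nf
  _ ≤ 1/2 * A ^ q + 1/2 * B ^ q := h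
  _ = (A ^ q + B ^ q) / 2 := by ring

lemma two_superadd_rpow {q : ℝ} (hq : 1 ≤ q) {A B : ℝ} (hA : 0 ≤ A) (hB : 0 ≤ B) :
    A ^ q + B ^ q ≤ (A + B) ^ q := by
  have h := NNReal.add_rpow_le_rpow_add A.toNNReal B.toNNReal hq
  have h2 := NNReal.coe_le_coe.2 h
  push_cast [NNReal.coe_rpow, Real.coe_toNNReal A hA, Real.coe_toNNReal B hB,
    ← Real.toNNReal_add hA hB, Real.coe_toNNReal _ (add_nonneg hA hB)] at h2
  exact h2

lemma clarkson {p : ℝ} (hp : 2 ≤ p) (s t : ℝ) :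
    |(s + t) / 2| ^ p + |(s - t) / 2| ^ p ≤ (|s| ^ p + |t| ^ p) / 2 := by
  have hq : (1 : ℝ) ≤ p / 2 := by linarith
  calc |(s + t) / 2| ^ p + |(s - t) / 2| ^ p
      = (((s + t) / 2) ^ 2) ^ (p / 2) + (((s - t) / 2) ^ 2) ^ (p / 2) := by
        rw [sq_rpow_half, sq_rpow_half]
  _ ≤ (((s + t) / 2) ^ 2 + ((s - t) / 2) ^ 2) ^ (p / 2) :=
        two_superadd_rpow hq (sq_nonneg _) (sq_nonneg _)
  _ = ((s ^ 2 + t ^ 2) / 2) ^ (p / 2) := by congr 1; ring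
  _ ≤ ((s ^ 2) ^ (p / 2) + (t ^ 2) ^ (p / 2)) / 2 :=
        two_convex_rpow hq (sq_nonneg _) (sq_nonneg _)
  _ = (|s| ^ p + |t| ^ p) / 2 := by rw [sq_rpow_half, sq_rpow_half]

lemma convexity_key {p : ℝ} (hp : 2 ≤ p) (a b : ℝ) :
    |a| ^ p - p * |a| ^ (p - 2) * a * b + (2 : ℝ) ^ (1 - p) * |b| ^ p ≤ |a - b| ^ p := by
  have h1 : |a| ^ p + p * |a| ^ (p - 2) * a * ((a - b / 2) - a) ≤ |a - b / 2| ^ p :=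
    tangent_ineq hp (a - b / 2) a
  have h2 : |(a + (a - b)) / 2| ^ p + |(a - (a - b)) / 2| ^ p ≤ (|a| ^ p + |a - b| ^ p) / 2 :=
    clarkson hp a (a - b)
  have e1 : (a + (a - b)) / 2 = a - b / 2 := by ring
  have e2 : (a - (a - b)) / 2 = b / 2 := by ring
  rw [e1, e2] at h2
  have e3 : |b / 2| ^ p = (2 : ℝ) ^ (1 - p) * |b| ^ p / 2 := by
    rw [abs_div, abs_two, Real.div_rpow (abs_nonneg b) (by norm_num : (0:ℝ) ≤ 2),
      Real.rpow_sub (by norm_num : (0:ℝ) < 2), Real.rpow_one]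
    ring
  nlinarith [h1, h2, e3]


section AnaHelpers

/-- master integrability lemma on `(0,∞)` -/
lemma integrableOn_aux {f : ℝ → ℝ} {R A B s : ℝ} (hR : 0 < R) (hs : -1 < s)
    (hf : ContinuousOn f (Ioi 0))
    (hbound : ∀ r ∈ Ioc (0:ℝ) R, |f r| ≤ A * r ^ s + B)
    (hvanish : ∀ r : ℝ, R < r → f r = 0) :
    IntegrableOn f (Ioi (0:ℝ)) := by
  have h1 : IntegrableOn f (Ioc 0 R) := by
    have hmeas : AEStronglyMeasurable f (volume.restrict (Ioc (0:ℝ) R)) :=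
      (hf.mono Ioc_subset_Ioi_self).aestronglyMeasurable measurableSet_Ioc
    have hrpow : IntegrableOn (fun r : ℝ => r ^ s) (Ioc (0:ℝ) R) := by
      have := (intervalIntegral.intervalIntegrable_rpow' (a := 0) (b := R) hs)
      rw [intervalIntegrable_iff, uIoc_of_le hR.le] at this
      exact this
    have hg : IntegrableOn (fun r : ℝ => A * r ^ s + B) (Ioc (0:ℝ) R) :=
      (hrpow.const_mul A).add (integrableOn_const measure_Ioc_lt_top.ne)
    exact Integrable.mono' hg hmeas <| by
      filter_upwards [ae_restrict_mem measurableSet_Ioc] with r hr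
      simpa using hbound r hr
  have h2 : IntegrableOn f (Ioi R) := by
    rw [integrableOn_congr_fun (g := fun _ => (0:ℝ)) (s := Ioi R) (fun r hr => hvanish r hr) measurableSet_Ioi]
    exact integrableOn_zero
  have : Ioi (0:ℝ) = Ioc 0 R ∪ Ioi R := (Ioc_union_Ioi_eq_Ioi hR.le).symm
  rw [this]
  exact h1.union h2

lemma sum_rpow_bound {p X Y : ℝ} (hp : 0 ≤ p) (hX : 0 ≤ X) (hY : 0 ≤ Y) :
    (X + Y) ^ p ≤ 2 ^ p * (X ^ p + Y ^ p) := by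
  have h1 : X + Y ≤ 2 * max X Y := by
    rcases le_total X Y with h | h
    · rw [max_eq_right h]; linarith
    · rw [max_eq_left h]; linarith
  have h2 : (X + Y) ^ p ≤ (2 * max X Y) ^ p :=
    Real.rpow_le_rpow (by linarith) h1 hp
  have h3 : (2 * max X Y : ℝ) ^ p = 2 ^ p * (max X Y) ^ p :=
    Real.mul_rpow (by norm_num) (le_max_of_le_left hX)
  have h4 : (max X Y : ℝ) ^ p ≤ X ^ p + Y ^ p := by
    rcases le_total X Y with h | h
    · rw [max_eq_right h]
      have := Real.rpow_nonneg hX p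
      linarith
    · rw [max_eq_left h]
      have := Real.rpow_nonneg hY p
      linarith
  calc (X + Y) ^ p ≤ 2 ^ p * (max X Y) ^ p := by rw [← h3]; exact h2
  _ ≤ 2 ^ p * (X ^ p + Y ^ p) := by
      have : (0:ℝ) ≤ (2:ℝ) ^ p := Real.rpow_nonneg (by norm_num) p
      nlinarith

end AnaHelpers

section PW

lemma pointwise_core {p γ r U DU : ℝ} (hp : 2 ≤ p) (hγ : 0 < γ) (hr : 0 < r) :
    γ ^ p * (r ^ (γ * p + p - 1) * (|U| ^ p / r ^ p))
      + (2:ℝ) ^ (1 - p) *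
          (r ^ (γ * p + p - 1) * (r ^ (-(γ * p)) * |γ * r ^ (γ - 1) * U + r ^ γ * DU| ^ p))
      - γ ^ (p - 1) *
          (p * |r ^ γ * U| ^ (p - 2) * (r ^ γ * U) * (γ * r ^ (γ - 1) * U + r ^ γ * DU))
    ≤ r ^ (γ * p + p - 1) * |DU| ^ p := by
  have hrg : (0:ℝ) < r ^ (γ - 1) := Real.rpow_pos_of_pos hr _
  have hrgg : (0:ℝ) < r ^ γ := Real.rpow_pos_of_pos hr _
  set A : ℝ := γ * r ^ (γ - 1) * U with hA
  set B : ℝ := A + r ^ γ * DU with hB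
  have hAabs : ∀ q : ℝ, |A| ^ q = γ ^ q * r ^ ((γ - 1) * q) * |U| ^ q := by
    intro q
    rw [hA, abs_mul, abs_mul, abs_of_pos hγ, abs_of_pos hrg,
      Real.mul_rpow (by positivity) (abs_nonneg U), Real.mul_rpow hγ.le hrg.le,
      ← Real.rpow_mul hr.le]
  have hVabs : ∀ q : ℝ, |r ^ γ * U| ^ q = r ^ (γ * q) * |U| ^ q := by
    intro q
    rw [abs_mul, abs_of_pos hrgg, Real.mul_rpow hrgg.le (abs_nonneg U),
      ← Real.rpow_mul hr.le]
  have hABp : |A - B| ^ p = r ^ (γ * p) * |DU| ^ p := by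
    have : A - B = -(r ^ γ * DU) := by rw [hB]; ring
    rw [this, abs_neg, abs_mul, abs_of_pos hrgg,
      Real.mul_rpow hrgg.le (abs_nonneg DU), ← Real.rpow_mul hr.le]
  have key := convexity_key hp A B
  have key2 := mul_le_mul_of_nonneg_left key (Real.rpow_nonneg hr.le (p - 1))
  have E1 : r ^ (p-1) * |A - B| ^ p = r ^ (γ*p + p - 1) * |DU| ^ p := by
    rw [hABp, show γ*p + p - 1 = (p-1) + γ*p by ring, Real.rpow_add hr]; ring
  have E2 : r ^ (p-1) * |A| ^ p = γ ^ p * (r ^ (γ*p+p-1) * (|U| ^ p / r ^ p)) := by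
    rw [hAabs p, show γ*p+p-1 = ((p-1) + (γ-1)*p) + p by ring, Real.rpow_add hr,
      Real.rpow_add hr]
    have h0 : (r:ℝ) ^ p ≠ 0 := (Real.rpow_pos_of_pos hr p).ne'
    field_simp
  have E3 : r ^ (p-1) * (p * |A| ^ (p-2) * A * B)
      = γ ^ (p-1) * (p * |r^γ*U| ^ (p-2) * (r^γ*U) * B) := by
    rw [hAabs (p-2), hVabs (p-2)]
    have c1 : r ^ (p-1) * r ^ ((γ-1)*(p-2)) * r ^ (γ-1) = r ^ (γ*(p-2)) * r ^ γ := by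
      rw [← Real.rpow_add hr, ← Real.rpow_add hr, ← Real.rpow_add hr]
      congr 1; ring
    have c2 : γ ^ (p-2) * γ = γ ^ (p-1) := by
      rw [show p - 1 = (p-2) + 1 by ring, Real.rpow_add_one hγ.ne']
    calc r ^ (p-1) * (p * (γ^(p-2) * r^((γ-1)*(p-2)) * |U|^(p-2)) * A * B)
        = p * (γ^(p-2)*γ) * (r^(p-1) * r^((γ-1)*(p-2)) * r^(γ-1)) * |U|^(p-2) * U * B := by
          rw [hA]; ring
      _ = p * γ^(p-1) * (r^(γ*(p-2)) * r^γ) * |U|^(p-2) * U * B := by rw [c1, c2]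
      _ = γ^(p-1) * (p * (r^(γ*(p-2)) * |U|^(p-2)) * (r^γ * U) * B) := by ring
  have E4 : r ^ (p-1) * ((2:ℝ)^(1-p) * |B| ^ p)
      = (2:ℝ)^(1-p) * (r ^ (γ*p+p-1) * (r ^ (-(γ*p)) * |B|^p)) := by
    rw [show γ*p+p-1 = (p-1)+γ*p by ring, Real.rpow_add hr, Real.rpow_neg hr.le]
    have h0 : (r:ℝ) ^ (γ*p) ≠ 0 := (Real.rpow_pos_of_pos hr _).ne'
    field_simp
  have expand : r ^ (p-1) * (|A| ^ p - p * |A| ^ (p - 2) * A * B + (2:ℝ) ^ (1 - p) * |B| ^ p)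
      = r ^ (p-1) * |A| ^ p - r ^ (p-1) * (p * |A| ^ (p-2) * A * B)
        + r ^ (p-1) * ((2:ℝ)^(1-p) * |B| ^ p) := by ring
  rw [expand, E1, E2, E3, E4] at key2
  linarith [key2]
end PW



lemma oneD_core (n : ℕ) (hn : 3 ≤ n) {p : ℝ} (hp : 2 ≤ p) (hpn : p < n)
    (u : ℝ → ℝ) (hu : ContDiff ℝ (⊤ : ℕ∞) u) (hsupp : HasCompactSupport u) :
    (∫ y in Ioi (0:ℝ), y ^ (n - 1) * |deriv u y| ^ p)
      - (((n:ℝ) - p) / p) ^ p * ∫ y in Ioi (0:ℝ), y ^ (n - 1) * (|u y| ^ p / y ^ p)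
    ≥ (2:ℝ) ^ (1 - p) * ∫ y in Ioi (0:ℝ),
        y ^ (n - 1) * (y ^ (p - (n:ℝ)) *
          |deriv (fun r : ℝ => r ^ (((n:ℝ) - p) / p) * u r) y| ^ p) := by
  have hp0 : (0:ℝ) < p := by linarith
  have hp1 : (1:ℝ) < p := by linarith
  have hn3 : (3:ℝ) ≤ (n:ℝ) := by exact_mod_cast hn
  set γ : ℝ := ((n:ℝ) - p) / p with hγdef
  have hγ : 0 < γ := div_pos (by linarith) hp0
  have hγp : γ * p = (n:ℝ) - p := by rw [hγdef, div_mul_cancel₀ _ hp0.ne']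
  have hud : Differentiable ℝ u := hu.differentiable (by simp)
  have hduc : Continuous (deriv u) := hu.continuous_deriv (by simp)
  -- support radius
  obtain ⟨R₀, hR₀⟩ := (Metric.isBounded_iff_subset_closedBall 0).1 hsupp.isCompact.isBounded
  set R : ℝ := |R₀| + 1 with hRdef
  have hR : 0 < R := by positivity
  have hmemR : ∀ r : ℝ, R < r → r ∉ tsupport u := by
    intro r hr hmem
    have := hR₀ hmem
    rw [Metric.mem_closedBall, Real.dist_eq, sub_zero] at this
    have h1 : r ≤ |r| := le_abs_self r
    have h2 : R₀ ≤ |R₀| := le_abs_self R₀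
    linarith
  have huR : ∀ r : ℝ, R < r → u r = 0 := fun r hr => by
    by_contra h
    exact hmemR r hr (subset_tsupport u h)
  have hduR : ∀ r : ℝ, R < r → deriv u r = 0 := fun r hr => by
    by_contra h
    exact hmemR r hr (support_deriv_subset h)
  -- bounds
  obtain ⟨Mu, hMu'⟩ := hsupp.exists_bound_of_continuous hu.continuous
  obtain ⟨Md, hMd'⟩ := hsupp.deriv.exists_bound_of_continuous hduc
  have hMu : ∀ r : ℝ, |u r| ≤ Mu := fun r => by simpa [Real.norm_eq_abs] using hMu' r
  have hMd : ∀ r : ℝ, |deriv u r| ≤ Md := fun r => by simpa [Real.norm_eq_abs] using hMd' r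
  have hMu0 : 0 ≤ Mu := le_trans (abs_nonneg _) (hMu 0)
  have hMd0 : 0 ≤ Md := le_trans (abs_nonneg _) (hMd 0)
  -- v, dv
  set v : ℝ → ℝ := fun r => r ^ γ * u r with hv
  set dv : ℝ → ℝ := fun r => γ * r ^ (γ - 1) * u r + r ^ γ * deriv u r with hdv
  have hvderiv : ∀ r ∈ Ioi (0:ℝ), HasDerivAt v (dv r) r := by
    intro r hr
    have h1 : HasDerivAt (fun s : ℝ => s ^ γ) (γ * r ^ (γ - 1)) r :=
      Real.hasDerivAt_rpow_const (Or.inl (ne_of_gt hr))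
    exact h1.mul (hud r).hasDerivAt
  have hvderivEq : ∀ r ∈ Ioi (0:ℝ), deriv v r = dv r := fun r hr => (hvderiv r hr).deriv
  have hdvR : ∀ r : ℝ, R < r → dv r = 0 := fun r hr => by
    simp [hdv, huR r hr, hduR r hr]
  have hvR : ∀ r : ℝ, R < r → v r = 0 := fun r hr => by simp [hv, huR r hr]
  -- continuity on Ioi 0
  have hcont_rpow : ∀ q : ℝ, ContinuousOn (fun r : ℝ => r ^ q) (Ioi (0:ℝ)) := fun q =>
    continuousOn_id.rpow_const (fun r hr => Or.inl (ne_of_gt hr))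
  have hdvcont : ContinuousOn dv (Ioi (0:ℝ)) :=
    ((continuousOn_const.mul (hcont_rpow (γ - 1))).mul hu.continuous.continuousOn).add
      ((hcont_rpow γ).mul hduc.continuousOn)
  have hvcont : ContinuousOn v (Ioi (0:ℝ)) := (hcont_rpow γ).mul hu.continuous.continuousOn
  -- nat pow ↔ rpow
  have hnp : ∀ y : ℝ, (y ^ (n - 1) : ℝ) = y ^ ((n:ℝ) - 1) := by
    intro y
    rw [← Real.rpow_natCast y (n - 1), Nat.cast_sub (by omega : 1 ≤ n), Nat.cast_one]
  -- the four functions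
  set F : ℝ → ℝ := fun y => y ^ (n - 1) * |deriv u y| ^ p with hF
  set G : ℝ → ℝ := fun y => y ^ (n - 1) * (|u y| ^ p / y ^ p) with hG
  set H : ℝ → ℝ := fun y => y ^ (n - 1) * (y ^ (p - (n:ℝ)) * |dv y| ^ p) with hH
  set K : ℝ → ℝ := fun y => p * |v y| ^ (p - 2) * v y * dv y with hK
  have hs1 : (-1:ℝ) < (n:ℝ) - p - 1 := by linarith
  -- integrability of F
  have hFint : IntegrableOn F (Ioi (0:ℝ)) := by
    apply integrableOn_aux (A := 0) (B := R ^ (n - 1) * Md ^ p) hR hs1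
    · exact (continuous_pow (n-1)).continuousOn.mul
        ((hduc.abs.rpow_const (fun y => Or.inr hp0.le)).continuousOn)
    · intro r hr
      have h0F : (0:ℝ) ≤ F r := by
        simp only [hF]
        exact mul_nonneg (pow_nonneg hr.1.le _) (Real.rpow_nonneg (abs_nonneg _) _)
      rw [abs_of_nonneg h0F, zero_mul, zero_add]
      simp only [hF]
      have h1 : r ^ (n-1) ≤ R ^ (n-1) := pow_le_pow_left₀ hr.1.le hr.2 _
      have h2 : |deriv u r| ^ p ≤ Md ^ p :=
        Real.rpow_le_rpow (abs_nonneg _) (hMd r) hp0.le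
      have h4 : (0:ℝ) ≤ |deriv u r| ^ p := Real.rpow_nonneg (abs_nonneg _) _
      exact mul_le_mul h1 h2 h4 (pow_nonneg hR.le _)
    · intro r hr
      simp [hF, hduR r hr, Real.zero_rpow hp0.ne']
  -- integrability of G
  have hGint : IntegrableOn G (Ioi (0:ℝ)) := by
    apply integrableOn_aux (A := Mu ^ p) (B := 0) hR hs1
    · exact (continuous_pow (n-1)).continuousOn.mul
        (((hu.continuous.abs.rpow_const (fun y => Or.inr hp0.le)).continuousOn).div
          (hcont_rpow p) (fun r hr => (Real.rpow_pos_of_pos hr p).ne'))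
    · intro r hr
      have h0G : (0:ℝ) ≤ G r := by
        simp only [hG]
        exact mul_nonneg (pow_nonneg hr.1.le _)
          (div_nonneg (Real.rpow_nonneg (abs_nonneg _) _) (Real.rpow_nonneg hr.1.le _))
      rw [abs_of_nonneg h0G, add_zero]
      simp only [hG]
      have e1 : r ^ (n - 1) * (|u r| ^ p / r ^ p) = r ^ ((n:ℝ) - p - 1) * |u r| ^ p := by
        have hc : r ^ p * (|u r| ^ p / r ^ p) = |u r| ^ p :=
          mul_div_cancel₀ _ (Real.rpow_pos_of_pos hr.1 p).ne'
        rw [hnp r, show ((n:ℝ) - 1 : ℝ) = ((n:ℝ) - p - 1) + p by ring, Real.rpow_add hr.1,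
          mul_assoc, hc]
      rw [e1, mul_comm (Mu ^ p) _]
      have hub : |u r| ^ p ≤ Mu ^ p := Real.rpow_le_rpow (abs_nonneg _) (hMu r) hp0.le
      have h3 : (0:ℝ) ≤ r ^ ((n:ℝ) - p - 1) := Real.rpow_nonneg hr.1.le _
      have h4 : (0:ℝ) ≤ |u r| ^ p := Real.rpow_nonneg (abs_nonneg _) _
      exact mul_le_mul_of_nonneg_left hub h3
    · intro r hr
      simp [hG, huR r hr, Real.zero_rpow hp0.ne']
  -- common bound for |dv|
  have hdvb : ∀ r ∈ Ioc (0:ℝ) R, |dv r| ≤ γ * Mu * r ^ (γ - 1) + Md * R ^ γ := by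
    intro r hr
    have hrg : (0:ℝ) < r ^ (γ - 1) := Real.rpow_pos_of_pos hr.1 _
    have hrgg : (0:ℝ) < r ^ γ := Real.rpow_pos_of_pos hr.1 _
    have h1 : |dv r| ≤ |γ * r ^ (γ - 1) * u r| + |r ^ γ * deriv u r| := by
      rw [hdv]; exact abs_add_le _ _
    have h2 : |γ * r ^ (γ - 1) * u r| = γ * r ^ (γ - 1) * |u r| := by
      rw [abs_mul, abs_mul, abs_of_pos hγ, abs_of_pos hrg]
    have h3 : |r ^ γ * deriv u r| = r ^ γ * |deriv u r| := by
      rw [abs_mul, abs_of_pos hrgg]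
    have h4 : r ^ γ ≤ R ^ γ := Real.rpow_le_rpow hr.1.le hr.2 hγ.le
    have h5 : γ * r ^ (γ - 1) * |u r| ≤ γ * Mu * r ^ (γ - 1) := by
      calc γ * r ^ (γ - 1) * |u r| ≤ γ * r ^ (γ - 1) * Mu :=
            mul_le_mul_of_nonneg_left (hMu r) (mul_nonneg hγ.le hrg.le)
      _ = γ * Mu * r ^ (γ - 1) := by ring
    have h6 : r ^ γ * |deriv u r| ≤ Md * R ^ γ := by
      calc r ^ γ * |deriv u r| ≤ R ^ γ * Md :=
            mul_le_mul h4 (hMd r) (abs_nonneg _) (Real.rpow_nonneg hR.le _)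
      _ = Md * R ^ γ := mul_comm _ _
    rw [h2, h3] at h1
    linarith
  -- integrability of H
  have hHint : IntegrableOn H (Ioi (0:ℝ)) := by
    apply integrableOn_aux (A := 2 ^ p * (γ * Mu) ^ p)
      (B := 2 ^ p * (Md * R ^ γ) ^ p * R ^ (p - 1)) hR hs1
    · exact (continuous_pow (n-1)).continuousOn.mul
        ((hcont_rpow (p - (n:ℝ))).mul
          ((hdvcont.abs).rpow_const (fun y hy => Or.inr hp0.le)))
    · intro r hr
      have hr0 := hr.1
      have h0H : (0:ℝ) ≤ H r := by
        simp only [hH]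
        exact mul_nonneg (pow_nonneg hr0.le _)
          (mul_nonneg (Real.rpow_nonneg hr0.le _) (Real.rpow_nonneg (abs_nonneg _) _))
      rw [abs_of_nonneg h0H]
      simp only [hH]
      have e1 : r ^ (n - 1) * (r ^ (p - (n:ℝ)) * |dv r| ^ p) = r ^ (p - 1) * |dv r| ^ p := by
        rw [hnp r, ← mul_assoc, ← Real.rpow_add hr0,
          show (n:ℝ) - 1 + (p - (n:ℝ)) = p - 1 by ring]
      rw [e1]
      have hX : (0:ℝ) ≤ γ * Mu * r ^ (γ - 1) :=
        mul_nonneg (mul_nonneg hγ.le hMu0) (Real.rpow_nonneg hr0.le _)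
      have hY : (0:ℝ) ≤ Md * R ^ γ := mul_nonneg hMd0 (Real.rpow_nonneg hR.le _)
      have h2 : |dv r| ^ p ≤ 2 ^ p * ((γ * Mu * r ^ (γ - 1)) ^ p + (Md * R ^ γ) ^ p) :=
        le_trans (Real.rpow_le_rpow (abs_nonneg _) (hdvb r hr) hp0.le)
          (sum_rpow_bound hp0.le hX hY)
      have e2 : (γ * Mu * r ^ (γ - 1)) ^ p = (γ * Mu) ^ p * r ^ ((γ - 1) * p) := by
        rw [Real.mul_rpow (mul_nonneg hγ.le hMu0) (Real.rpow_nonneg hr0.le _),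
          ← Real.rpow_mul hr0.le]
      rw [e2] at h2
      have hrp1 : (0:ℝ) ≤ r ^ (p - 1) := Real.rpow_nonneg hr0.le _
      have step := mul_le_mul_of_nonneg_left h2 hrp1
      have e5 : r ^ (p-1) * (2 ^ p * ((γ * Mu) ^ p * r ^ ((γ - 1) * p) + (Md * R ^ γ) ^ p))
          = 2 ^ p * (γ * Mu) ^ p * (r ^ (p-1) * r ^ ((γ - 1) * p))
            + 2 ^ p * (Md * R ^ γ) ^ p * r ^ (p-1) := by ring
      have e3 : r ^ (p-1) * r ^ ((γ - 1) * p) = r ^ ((n:ℝ) - p - 1) := by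
        rw [← Real.rpow_add hr0]
        congr 1
        have h := hγp
        nlinarith [h]
      rw [e5, e3] at step
      have e4 : r ^ (p - 1) ≤ R ^ (p - 1) := Real.rpow_le_rpow hr0.le hr.2 (by linarith)
      have hc2 : (0:ℝ) ≤ 2 ^ p * (Md * R ^ γ) ^ p :=
        mul_nonneg (Real.rpow_nonneg (by norm_num) _) (Real.rpow_nonneg hY _)
      nlinarith [step, mul_le_mul_of_nonneg_left e4 hc2]
    · intro r hr
      simp [hH, hdvR r hr, Real.zero_rpow hp0.ne']
  -- integrability of K
  have hKabs : ∀ r : ℝ, |K r| = p * |v r| ^ (p - 1) * |dv r| := by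
    intro r
    have : |K r| = p * |v r| ^ (p - 2) * |v r| * |dv r| := by
      simp only [hK]
      rw [abs_mul, abs_mul, abs_mul, abs_of_pos hp0,
        abs_of_nonneg (Real.rpow_nonneg (abs_nonneg _) _)]
    rw [this, mul_assoc p, abs_rpow_mul_abs hp]
  have hKint : IntegrableOn K (Ioi (0:ℝ)) := by
    apply integrableOn_aux (A := p * Mu ^ (p-1) * (γ * Mu))
      (B := p * Mu ^ (p-1) * (Md * R ^ γ) * R ^ (γ * (p-1))) hR hs1
    · exact ((continuousOn_const.mul
        ((hvcont.abs).rpow_const (fun x hx => Or.inr (by linarith : (0:ℝ) ≤ p - 2)))).mul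
          hvcont).mul hdvcont
    · intro r hr
      have hr0 := hr.1
      rw [hKabs r]
      have hvb : |v r| ≤ r ^ γ * Mu := by
        simp only [hv]
        rw [abs_mul, abs_of_pos (Real.rpow_pos_of_pos hr0 γ)]
        exact mul_le_mul_of_nonneg_left (hMu r) (Real.rpow_nonneg hr0.le _)
      have hvp : |v r| ^ (p-1) ≤ r ^ (γ*(p-1)) * Mu ^ (p-1) := by
        refine le_trans (Real.rpow_le_rpow (abs_nonneg _) hvb (by linarith)) (le_of_eq ?_)
        rw [Real.mul_rpow (Real.rpow_nonneg hr0.le _) hMu0, ← Real.rpow_mul hr0.le]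
      have h1 : (0:ℝ) ≤ r ^ (γ*(p-1)) * Mu ^ (p-1) :=
        mul_nonneg (Real.rpow_nonneg hr0.le _) (Real.rpow_nonneg hMu0 _)
      have step : p * |v r| ^ (p-1) * |dv r|
          ≤ p * (r ^ (γ*(p-1)) * Mu ^ (p-1)) * (γ * Mu * r ^ (γ - 1) + Md * R ^ γ) :=
        mul_le_mul (mul_le_mul_of_nonneg_left hvp hp0.le) (hdvb r hr) (abs_nonneg _)
          (mul_nonneg hp0.le h1)
      have e5 : p * (r ^ (γ*(p-1)) * Mu ^ (p-1)) * (γ * Mu * r ^ (γ - 1) + Md * R ^ γ)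
          = p * Mu ^ (p-1) * (γ * Mu) * (r ^ (γ*(p-1)) * r ^ (γ - 1))
            + p * Mu ^ (p-1) * (Md * R ^ γ) * r ^ (γ*(p-1)) := by ring
      have e3 : r ^ (γ*(p-1)) * r ^ (γ - 1) = r ^ ((n:ℝ) - p - 1) := by
        rw [← Real.rpow_add hr0]
        congr 1
        nlinarith [hγp]
      rw [e5, e3] at step
      have e4 : r ^ (γ*(p-1)) ≤ R ^ (γ*(p-1)) :=
        Real.rpow_le_rpow hr0.le hr.2 (mul_nonneg hγ.le (by linarith))
      have hc2 : (0:ℝ) ≤ p * Mu ^ (p-1) * (Md * R ^ γ) := by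
        have h1 : (0:ℝ) ≤ Mu ^ (p-1) := Real.rpow_nonneg hMu0 _
        have h2 : (0:ℝ) ≤ Md * R ^ γ := mul_nonneg hMd0 (Real.rpow_nonneg hR.le _)
        positivity
      nlinarith [step, mul_le_mul_of_nonneg_left e4 hc2]
    · intro r hr
      simp [hK, hvR r hr]
  -- FTC : cross term integrates to zero
  have hKzero : ∫ y in Ioi (0:ℝ), K y = 0 := by
    have hwd : ∀ y ∈ Ioi (0:ℝ), HasDerivAt (fun s => |v s| ^ p) (K y) y := by
      intro y hy
      have h2 := hasDerivAt_abs_rpow (v y) hp1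
      have h3 := h2.comp y (hvderiv y hy)
      simpa [Function.comp_def, hK, mul_assoc] using h3
    have hwcont : ContinuousWithinAt (fun s => |v s| ^ p) (Ici (0:ℝ)) 0 := by
      have hvc : ContinuousAt v 0 := by
        have h1 : ContinuousAt (fun r : ℝ => r ^ γ) 0 :=
          Real.continuousAt_rpow_const 0 γ (Or.inr hγ.le)
        exact h1.mul hu.continuous.continuousAt
      have habs : Continuous (fun s : ℝ => |s| ^ p) :=
        continuous_abs.rpow_const (fun s => Or.inr hp0.le)
      exact (habs.continuousAt.comp hvc).continuousWithinAt
    have hwtop : Tendsto (fun s => |v s| ^ p) atTop (𝓝 (0:ℝ)) := by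
      have hev : (fun s => |v s| ^ p) =ᶠ[atTop] (fun _ => (0:ℝ)) := by
        filter_upwards [eventually_gt_atTop R] with y hy
        simp [hvR y hy, Real.zero_rpow hp0.ne']
      exact Tendsto.congr' hev.symm tendsto_const_nhds
    have h0 := integral_Ioi_of_hasDerivAt_of_tendsto hwcont hwd hKint hwtop
    rw [h0]
    simp [hv, Real.zero_rpow hγ.ne', Real.zero_rpow hp0.ne']
  -- pointwise inequality
  have hpoint : ∀ y ∈ Ioi (0:ℝ),
      0 ≤ F y - γ ^ p * G y - (2:ℝ) ^ (1 - p) * H y + γ ^ (p - 1) * K y := by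
    intro y hy
    have hy0 : (0:ℝ) < y := hy
    have hpc := pointwise_core (p := p) (γ := γ) (r := y) (U := u y) (DU := deriv u y)
      hp hγ hy0
    rw [show γ * p + p - 1 = (n:ℝ) - 1 by linarith [hγp],
      show -(γ * p) = p - (n:ℝ) by linarith [hγp]] at hpc
    simp only [hF, hG, hH, hK, hv, hdv]
    rw [hnp y]
    linarith [hpc]
  -- replace deriv v by dv in the third integral
  have hIeq3 : (∫ y in Ioi (0:ℝ), y ^ (n - 1) * (y ^ (p - (n:ℝ)) * |deriv v y| ^ p))
      = ∫ y in Ioi (0:ℝ), H y := by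
    apply setIntegral_congr_fun measurableSet_Ioi
    intro y hy
    simp only [hH]
    rw [hvderivEq y hy]
  -- combine
  have hsum : 0 ≤ ∫ y in Ioi (0:ℝ),
      (F y - γ ^ p * G y - (2:ℝ) ^ (1 - p) * H y + γ ^ (p - 1) * K y) :=
    setIntegral_nonneg measurableSet_Ioi hpoint
  have hint1 : IntegrableOn (fun y => F y - γ ^ p * G y) (Ioi (0:ℝ)) := by
    exact hFint.sub (hGint.const_mul _)
  have hint2 : IntegrableOn
      (fun y => F y - γ ^ p * G y - (2:ℝ) ^ (1 - p) * H y) (Ioi (0:ℝ)) := by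
    exact hint1.sub (hHint.const_mul _)
  have hsplit : ∫ y in Ioi (0:ℝ),
      (F y - γ ^ p * G y - (2:ℝ) ^ (1 - p) * H y + γ ^ (p - 1) * K y)
      = ((∫ y in Ioi (0:ℝ), F y) - γ ^ p * ∫ y in Ioi (0:ℝ), G y)
        - (2:ℝ) ^ (1 - p) * (∫ y in Ioi (0:ℝ), H y)
        + γ ^ (p - 1) * ∫ y in Ioi (0:ℝ), K y := by
    rw [integral_add hint2 (hKint.const_mul _),
      integral_sub hint1 (hHint.const_mul _),
      integral_sub hFint (hGint.const_mul _),
      integral_const_mul, integral_const_mul, integral_const_mul]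
  rw [hsplit, hKzero] at hsum
  rw [ge_iff_le, hIeq3]
  linarith [hsum]


end RadialHardyAux

open MeasureTheory


/-- Euclidean radial intermediate stability estimate: for `n ≥ 3`, `2 ≤ p < n`,
there is `C > 0` such that for every smooth compactly supported radial function
`u` on `ℝⁿ` (given by its radial profile `u : ℝ → ℝ`), the Hardy deficit dominates
`C ∫ |x|^(p-n) |∂_r v|^p dx`, where `v(r) = r^((n-p)/p) u(r)`. -/
theorem radial_hardy_deficit_dominates (n : ℕ) (hn : 3 ≤ n) (p : ℝ)
    (hp : 2 ≤ p) (hpn : p < n) :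
    ∃ C : ℝ, 0 < C ∧ ∀ u : ℝ → ℝ, ContDiff ℝ (⊤ : ℕ∞) u → HasCompactSupport u →
      (∫ x : EuclideanSpace ℝ (Fin n), |deriv u ‖x‖| ^ p)
        - (((n : ℝ) - p) / p) ^ p *
            (∫ x : EuclideanSpace ℝ (Fin n), |u ‖x‖| ^ p / ‖x‖ ^ p)
      ≥ C * ∫ x : EuclideanSpace ℝ (Fin n),
          ‖x‖ ^ (p - (n : ℝ)) *
            |deriv (fun r : ℝ => r ^ (((n : ℝ) - p) / p) * u r) ‖x‖| ^ p := by
  have hdim : Module.finrank ℝ (EuclideanSpace ℝ (Fin n)) = n := by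
    simp [finrank_euclideanSpace]
  haveI : Nontrivial (EuclideanSpace ℝ (Fin n)) :=
    Module.nontrivial_of_finrank_pos (R := ℝ) (by rw [hdim]; omega)
  refine ⟨(2:ℝ) ^ (1 - p), Real.rpow_pos_of_pos two_pos _, ?_⟩
  intro u hu hsupp
  have h1 := integral_fun_norm_addHaar (volume : Measure (EuclideanSpace ℝ (Fin n)))
      (fun r : ℝ => |deriv u r| ^ p)
  have h2 := integral_fun_norm_addHaar (volume : Measure (EuclideanSpace ℝ (Fin n)))
      (fun r : ℝ => |u r| ^ p / r ^ p)
  have h3 := integral_fun_norm_addHaar (volume : Measure (EuclideanSpace ℝ (Fin n)))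
      (fun r : ℝ => r ^ (p - (n:ℝ)) *
        |deriv (fun s : ℝ => s ^ (((n:ℝ) - p) / p) * u s) r| ^ p)
  rw [hdim] at h1 h2 h3
  rw [show (∫ x : EuclideanSpace ℝ (Fin n), |deriv u ‖x‖| ^ p) = _ from h1,
    show (∫ x : EuclideanSpace ℝ (Fin n), |u ‖x‖| ^ p / ‖x‖ ^ p) = _ from h2,
    show (∫ x : EuclideanSpace ℝ (Fin n), ‖x‖ ^ (p - (n:ℝ)) *
        |deriv (fun r : ℝ => r ^ (((n:ℝ) - p) / p) * u r) ‖x‖| ^ p) = _ from h3]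
  simp only [nsmul_eq_mul, smul_eq_mul]
  set c : ℝ := (n:ℝ) * volume.real (Metric.ball (0 : EuclideanSpace ℝ (Fin n)) 1) with hcdef
  have hc : 0 < c := by
    apply mul_pos
    · have : (0:ℕ) < n := by omega
      exact_mod_cast this
    · exact ENNReal.toReal_pos (Metric.measure_ball_pos volume (0 : EuclideanSpace ℝ (Fin n)) one_pos).ne' measure_ball_lt_top.ne
  have h1d := oneD_core n hn hp hpn u hu hsupp
  rw [ge_iff_le] at h1d ⊢
  have key := mul_le_mul_of_nonneg_left h1d hc.le
  set I1 := ∫ y in Ioi (0:ℝ), y ^ (n - 1) * |deriv u y| ^ p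
  set I2 := ∫ y in Ioi (0:ℝ), y ^ (n - 1) * (|u y| ^ p / y ^ p)
  set I3 := ∫ y in Ioi (0:ℝ), y ^ (n - 1) * (y ^ (p - (n:ℝ)) *
    |deriv (fun r : ℝ => r ^ (((n:ℝ) - p) / p) * u r) y| ^ p)
  nlinarith [key]
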